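/- arXiv:1812.10147 — 3 statements merged into one kernel-verified Lean document; each statement's English description precedes it below -/
import Mathlib

section
/- Let X = (X_n) be an irreducible, aperiodic, positive recurrent Markov chain on a countable set A with stationary distribution π and reversed chain X̂. Let μ and η be arbitrary probability distributions on A, and for any initial distribution ρ write P_ρ, E_ρ for the law and expectation of the chain started from ρ. Define L_n = Σ_{i=1}^n 1{X_i = X_{n+1}} and L̂_{n+1}(X̂_1) = Σ_{i=1}^{n+1} 1{X̂_i = X̂_1}. Then for any nonnegative measurable function f and all n ≥ 1: E_μ[ (η(X_{n+1})/π(X_{n+1})) f(L_n) ] = E_η[ (μ(X̂_{n+1})/π(X̂_{n+1})) f(L̂_{n+1}(X̂_1) − 1) ], where on the right-hand side η is the initial distribution of the reversed chain. -/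
open MeasureTheory ENNReal Finset

/-- The finite-dimensional law of a Markov chain `X` (indexed from 0) with initial
distribution `μ` and transition operator `Q`. -/
def IsChainLaw {A Ω : Type*} [MeasurableSpace Ω] (P : Measure Ω) (X : ℕ → Ω → A)
    (μ : A → ℝ≥0∞) (Q : A → A → ℝ≥0∞) : Prop :=
  ∀ (n : ℕ) (a : ℕ → A),
    P (⋂ i ∈ Finset.range (n + 1), {ω | X i ω = a i}) =
      μ (a 0) * ∏ i ∈ Finset.range n, Q (a i) (a (i + 1))

/-!
Both expectations are sums over paths `a = (a₀, …, aₙ)` of the integrand on the path times the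
probability of the path. The events `{(X₀, …, Xₙ) = a}` need not be measurable, but their outer
measures add up to the total mass, which makes each of them null measurable. Reversing paths then
matches the two sums term by term: detailed balance `π x * Q̂ x y = π y * Q y x` gives
`π aₙ ∏ Q̂ (aᵢ₊₁, aᵢ) = π a₀ ∏ Q (aᵢ, aᵢ₊₁)`, and the number of visits of the reversed path to its
starting point, minus one, is the number of visits of `a` to `aₙ` before time `n`.
-/

section CountableFibres

variable {Ω β : Type*} [MeasurableSpace Ω] {μ : Measure Ω} [IsFiniteMeasure μ]

theorem nullMeasurableSet_of_measure_add_measure_compl_le {s : Set Ω}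
    (h : μ s + μ sᶜ ≤ μ Set.univ) : NullMeasurableSet s μ := by
  set t := toMeasurable μ s
  have hst : s ⊆ t := subset_toMeasurable μ s
  have ht : MeasurableSet t := measurableSet_toMeasurable μ s
  have hsplit : μ (t \ s) + μ tᶜ = μ sᶜ := by
    have hin : sᶜ ∩ t = t \ s := Set.inter_comm _ _
    have hout : sᶜ \ t = tᶜ := by
      rw [Set.sdiff_eq, ← Set.compl_union, Set.union_eq_right.mpr hst]
    rw [← measure_inter_add_sdiff sᶜ ht, hin, hout]
  have hnull : μ (t \ s) = 0 := by
    have : μ s + μ tᶜ + μ (t \ s) ≤ μ s + μ tᶜ + 0 :=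
      calc μ s + μ tᶜ + μ (t \ s) = μ s + μ sᶜ := by rw [← hsplit]; ring
        _ ≤ μ Set.univ := h
        _ = μ s + μ tᶜ + 0 := by
          rw [add_zero, ← measure_add_measure_compl ht, measure_toMeasurable]
    exact nonpos_iff_eq_zero.mp ((ENNReal.add_le_add_iff_left (by finiteness)).mp this)
  exact ht.nullMeasurableSet.congr
    (ae_eq_set.mpr ⟨hnull, by rw [Set.sdiff_eq_empty.mpr hst, measure_empty]⟩)

variable [Countable β]

theorem nullMeasurableSet_preimage_singleton_of_tsum_le {p : Ω → β}
    (h : ∑' b, μ (p ⁻¹' {b}) ≤ μ Set.univ) (b : β) : NullMeasurableSet (p ⁻¹' {b}) μ := by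
  refine nullMeasurableSet_of_measure_add_measure_compl_le (le_trans ?_ h)
  have hcompl : (p ⁻¹' {b})ᶜ = ⋃ c ∈ ({b}ᶜ : Set β), p ⁻¹' {c} := by
    ext ω; simp [eq_comm]
  calc μ (p ⁻¹' {b}) + μ (p ⁻¹' {b})ᶜ
      ≤ ∑' c : ({b} : Set β), μ (p ⁻¹' {(c : β)}) +
          ∑' c : ({b}ᶜ : Set β), μ (p ⁻¹' {(c : β)}) := by
        rw [tsum_singleton b (fun c => μ (p ⁻¹' {c})), hcompl]
        gcongr
        exact measure_biUnion_le μ (Set.to_countable _) _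
    _ = ∑' c, μ (p ⁻¹' {c}) :=
        ENNReal.summable.tsum_add_tsum_compl (f := fun c => μ (p ⁻¹' {c})) ENNReal.summable

theorem lintegral_comp_eq_tsum_of_tsum_measure_preimage_le {p : Ω → β}
    (h : ∑' b, μ (p ⁻¹' {b}) ≤ μ Set.univ) (g : β → ℝ≥0∞) :
    ∫⁻ ω, g (p ω) ∂μ = ∑' b, g b * μ (p ⁻¹' {b}) := by
  have hfib := nullMeasurableSet_preimage_singleton_of_tsum_le h
  calc ∫⁻ ω, g (p ω) ∂μ = ∫⁻ ω in ⋃ b, p ⁻¹' {b}, g (p ω) ∂μ := by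
        rw [← Set.preimage_iUnion, Set.iUnion_of_singleton, Set.preimage_univ,
          Measure.restrict_univ]
    _ = ∑' b, ∫⁻ ω in p ⁻¹' {b}, g (p ω) ∂μ :=
        lintegral_iUnion₀ hfib
          (fun b c hbc => (Set.disjoint_singleton.mpr hbc).preimage p |>.aedisjoint) _
    _ = ∑' b, g b * μ (p ⁻¹' {b}) := by
        refine tsum_congr fun b => ?_
        rw [← setLIntegral_const]
        refine lintegral_congr_ae ?_
        filter_upwards [ae_restrict_mem₀ (hfib b)] with ω hω using congrArg g hω

end CountableFibres

section Paths

variable {A : Type*}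

noncomputable def pathWeight (ν : A → ℝ≥0∞) (K : A → A → ℝ≥0∞) {n : ℕ} (a : Fin (n + 1) → A) :
    ℝ≥0∞ :=
  ν (a 0) * ∏ i : Fin n, K (a i.castSucc) (a i.succ)

theorem pathWeight_snoc (ν : A → ℝ≥0∞) (K : A → A → ℝ≥0∞) {n : ℕ} (b : Fin (n + 1) → A)
    (y : A) : pathWeight ν K (Fin.snoc b y : Fin (n + 2) → A) =
      pathWeight ν K b * K (b (Fin.last n)) y := by
  simp only [pathWeight, Fin.prod_univ_castSucc, Fin.succ_castSucc, Fin.snoc_castSucc,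
    ← Fin.castSucc_zero, Fin.succ_last, Fin.snoc_last, mul_assoc]

theorem tsum_pathWeight [Countable A] {K : A → A → ℝ≥0∞} (hK : ∀ x, ∑' y, K x y = 1)
    (ν : A → ℝ≥0∞) : ∀ n : ℕ, ∑' a : Fin (n + 1) → A, pathWeight ν K a = ∑' x, ν x
  | 0 => by
    rw [← (Equiv.funUnique (Fin 1) A).symm.tsum_eq]
    simp [pathWeight]
  | n + 1 => by
    rw [← (Fin.snocEquiv fun _ => A).tsum_eq, ENNReal.tsum_prod', ENNReal.tsum_comm,
      ← tsum_pathWeight hK ν n]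
    refine tsum_congr fun b => ?_
    change ∑' y, pathWeight ν K (Fin.snoc b y : Fin (n + 2) → A) = _
    simp only [pathWeight_snoc, ENNReal.tsum_mul_left, hK, mul_one]

theorem tsum_comp_rev {M : Type*} [AddCommMonoid M] [TopologicalSpace M] {m : ℕ}
    (g : (Fin m → A) → M) : ∑' a, g (a ∘ Fin.rev) = ∑' a, g a :=
  (Function.Involutive.toPerm (fun a : Fin m → A => a ∘ Fin.rev)
    fun a => funext fun i => congrArg a (Fin.rev_rev i)).tsum_eq g

theorem prod_transition_comp_rev (K : A → A → ℝ≥0∞) {n : ℕ} (a : Fin (n + 1) → A) :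
    ∏ i : Fin n, K (a i.castSucc.rev) (a i.succ.rev) =
      ∏ i : Fin n, K (a i.succ) (a i.castSucc) := by
  simp only [Fin.rev_castSucc, Fin.rev_succ]
  exact Fintype.prod_equiv Fin.revPerm _ _ fun i => by simp

theorem mul_prod_reverse_eq_of_detailedBalance {π : A → ℝ≥0∞} {K Khat : A → A → ℝ≥0∞}
    (hdb : ∀ x y, π x * Khat x y = π y * K y x) :
    ∀ {n : ℕ} (a : Fin (n + 1) → A),
      π (a (Fin.last n)) * ∏ i : Fin n, Khat (a i.succ) (a i.castSucc) =
        π (a 0) * ∏ i : Fin n, K (a i.castSucc) (a i.succ)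
  | 0, a => by simp [Fin.last_zero]
  | n + 1, a => by
    have ih := mul_prod_reverse_eq_of_detailedBalance hdb (Fin.init a)
    simp only [Fin.init, Fin.castSucc_zero] at ih
    rw [Fin.prod_univ_castSucc, Fin.prod_univ_castSucc]
    simp only [Fin.succ_castSucc, Fin.succ_last]
    set Phat := ∏ i : Fin n, Khat (a i.succ.castSucc) (a i.castSucc.castSucc)
    set x := a (Fin.last n).castSucc
    set y := a (Fin.last (n + 1))
    calc _ = Phat * (π y * Khat y x) := by ring
      _ = (π x * Phat) * K x y := by rw [hdb]; ring
      _ = _ := by rw [ih]; ring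

end Paths

section ChainLaw

variable {A Ω : Type*} [MeasurableSpace Ω] {P : Measure Ω} {Z : ℕ → Ω → A}
  {ν : A → ℝ≥0∞} {K : A → A → ℝ≥0∞}

theorem IsChainLaw.measure_path_preimage (hZ : IsChainLaw P Z ν K) {n : ℕ}
    (a : Fin (n + 1) → A) :
    P ((fun ω (i : Fin (n + 1)) => Z i ω) ⁻¹' {a}) = pathWeight ν K a := by
  let a' : ℕ → A := fun j => if h : j < n + 1 then a ⟨j, h⟩ else a 0
  have hcyl : (fun ω (i : Fin (n + 1)) => Z i ω) ⁻¹' {a} =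
      ⋂ i ∈ Finset.range (n + 1), {ω | Z i ω = a' i} := by
    ext ω
    simp +contextual [a', funext_iff, Fin.forall_iff]
  rw [hcyl, hZ n a', pathWeight, ← Fin.prod_univ_eq_prod_range]
  simp only [a', Order.lt_add_one_iff, Order.add_one_le_iff, zero_le, Fin.is_le', Fin.is_lt,
    ↓reduceDIte]
  rfl

theorem IsChainLaw.lintegral_comp_path [IsProbabilityMeasure P] [Countable A]
    (hZ : IsChainLaw P Z ν K) (hν : ∑' x, ν x = 1) (hK : ∀ x, ∑' y, K x y = 1) {n : ℕ}
    (g : (Fin (n + 1) → A) → ℝ≥0∞) :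
    ∫⁻ ω, g (fun i => Z i ω) ∂P = ∑' a, g a * pathWeight ν K a := by
  have hfibres : ∑' a, P ((fun ω (i : Fin (n + 1)) => Z i ω) ⁻¹' {a}) ≤ P Set.univ := by
    simp only [hZ.measure_path_preimage, tsum_pathWeight hK, hν, measure_univ, le_refl]
  simp only [lintegral_comp_eq_tsum_of_tsum_measure_preimage_le hfibres, hZ.measure_path_preimage]

end ChainLaw

section Reversal

variable {A : Type*}

theorem pathWeight_mul_div_eq_pathWeight_rev {π : A → ℝ≥0∞} {K Khat : A → A → ℝ≥0∞}
    (hdb : ∀ x y, π x * Khat x y = π y * K y x) (hπ0 : ∀ x, π x ≠ 0) (hπtop : ∀ x, π x ≠ ∞)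
    (μ η : A → ℝ≥0∞) {n : ℕ} (a : Fin (n + 1) → A) :
    pathWeight μ K a * (η (a (Fin.last n)) / π (a (Fin.last n))) =
      pathWeight η Khat (a ∘ Fin.rev) * (μ (a 0) / π (a 0)) := by
  simp only [pathWeight, Function.comp_apply, Fin.rev_zero, prod_transition_comp_rev]
  set PK := ∏ i : Fin n, K (a i.castSucc) (a i.succ)
  set PKhat := ∏ i : Fin n, Khat (a i.succ) (a i.castSucc)
  have hratio : PK / π (a (Fin.last n)) = PKhat / π (a 0) :=
    (ENNReal.div_eq_div_iff (hπ0 _) (hπtop _) (hπ0 _) (hπtop _)).mpr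
      (mul_prod_reverse_eq_of_detailedBalance hdb a).symm
  calc μ (a 0) * PK * (η (a (Fin.last n)) / π (a (Fin.last n)))
      = μ (a 0) * η (a (Fin.last n)) * (PK / π (a (Fin.last n))) := by
        simp only [div_eq_mul_inv]; ring
    _ = η (a (Fin.last n)) * PKhat * (μ (a 0) / π (a 0)) := by
        rw [hratio]; simp only [div_eq_mul_inv]; ring

theorem sum_ite_rev_eq_last_sub_one [DecidableEq A] {n : ℕ} (a : Fin (n + 1) → A) :
    (∑ i : Fin (n + 1), if a i.rev = a (Fin.last n) then 1 else 0) - 1 =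
      ∑ i : Fin n, if a i.castSucc = a (Fin.last n) then 1 else 0 := by
  rw [Fintype.sum_equiv Fin.revPerm (fun i => if a i.rev = a (Fin.last n) then 1 else 0)
    (fun i => if a i = a (Fin.last n) then 1 else 0) fun _ => rfl,
    Fin.sum_univ_castSucc, if_pos rfl, Nat.add_sub_cancel]

end Reversal

theorem lemma_taun_general {A : Type*} [Countable A] [DecidableEq A]
    {Ω Ω' : Type*} [MeasurableSpace Ω] [MeasurableSpace Ω']
    (P : Measure Ω) [IsProbabilityMeasure P] (P' : Measure Ω') [IsProbabilityMeasure P']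
    (X : ℕ → Ω → A) (Y : ℕ → Ω' → A)
    (Q Qhat : A → A → ℝ≥0∞) (π μ η : A → ℝ≥0∞)
    (hQ : ∀ x, ∑' y, Q x y = 1)
    (hμ : ∑' x, μ x = 1) (hη : ∑' x, η x = 1)
    (hπpos : ∀ x, 0 < π x) (hπfin : ∀ x, π x ≠ ∞)
    (hstat : ∀ x, ∑' y, π y * Q y x = π x)
    (hQhat : ∀ x y, Qhat x y = π y * Q y x / π x)
    (hX : IsChainLaw P X μ Q) (hY : IsChainLaw P' Y η Qhat)
    (f : ℕ → ℝ≥0∞) (n : ℕ) :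
    ∫⁻ ω, (η (X n ω) / π (X n ω)) *
        f (∑ i ∈ Finset.range n, if X i ω = X n ω then 1 else 0) ∂P =
      ∫⁻ ω, (μ (Y n ω) / π (Y n ω)) *
        f ((∑ i ∈ Finset.range (n + 1), if Y i ω = Y 0 ω then 1 else 0) - 1) ∂P' := by
  have hdb : ∀ x y, π x * Qhat x y = π y * Q y x := fun x y => by
    rw [hQhat, ENNReal.mul_div_cancel (hπpos x).ne' (hπfin x)]
  have hQhat_sum : ∀ x, ∑' y, Qhat x y = 1 := fun x => by
    simp only [hQhat, div_eq_mul_inv, ENNReal.tsum_mul_right, hstat,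
      ENNReal.mul_inv_cancel (hπpos x).ne' (hπfin x)]
  have hLHS := hX.lintegral_comp_path hμ hQ fun a : Fin (n + 1) → A =>
    η (a (Fin.last n)) / π (a (Fin.last n)) *
      f (∑ i : Fin n, if a i.castSucc = a (Fin.last n) then 1 else 0)
  have hRHS := hY.lintegral_comp_path hη hQhat_sum fun b : Fin (n + 1) → A =>
    μ (b (Fin.last n)) / π (b (Fin.last n)) *
      f ((∑ i : Fin (n + 1), if b i = b 0 then 1 else 0) - 1)
  simp only [Finset.sum_range]
  refine hLHS.trans (Eq.trans ?_ hRHS.symm)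
  refine Eq.trans ?_ (tsum_comp_rev _)
  refine tsum_congr fun a => ?_
  simp only [Function.comp_apply, Fin.rev_last, Fin.rev_zero, sum_ite_rev_eq_last_sub_one]
  calc _ = f (∑ i : Fin n, if a i.castSucc = a (Fin.last n) then 1 else 0) *
        (pathWeight μ Q a * (η (a (Fin.last n)) / π (a (Fin.last n)))) := by ring
    _ = _ := by
      rw [pathWeight_mul_div_eq_pathWeight_rev hdb (fun x => (hπpos x).ne') hπfin]; ring

/-- Lemma 2.1: with `L_n = Σ_{i=1}^n 1{X_i = X_{n+1}}` and
`L̂_{n+1}(X̂_1) = Σ_{i=1}^{n+1} 1{X̂_i = X̂_1}`, for every nonnegative `f` and `n ≥ 1`,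
`E_μ[(η(X_{n+1})/π(X_{n+1})) f(L_n)] = E_η[(μ(X̂_{n+1})/π(X̂_{n+1})) f(L̂_{n+1}(X̂_1) − 1)]`,
where `X̂` is the reversed chain started from `η`. (Here chains are indexed from 0.) -/
theorem lemma_taun {A : Type*} [Countable A] [DecidableEq A]
    {Ω Ω' : Type*} [MeasurableSpace Ω] [MeasurableSpace Ω']
    (P : Measure Ω) [IsProbabilityMeasure P] (P' : Measure Ω') [IsProbabilityMeasure P']
    (X : ℕ → Ω → A) (Y : ℕ → Ω' → A)
    (Q Qhat : A → A → ℝ≥0∞) (π μ η : A → ℝ≥0∞)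
    (hQ : ∀ x, ∑' y, Q x y = 1)
    (hμ : ∑' x, μ x = 1) (hη : ∑' x, η x = 1)
    (hπpos : ∀ x, 0 < π x) (hπfin : ∀ x, π x ≠ ∞) (hπsum : ∑' x, π x = 1)
    (hstat : ∀ x, ∑' y, π y * Q y x = π x)
    (hirr : ∀ x y, ∃ t : ℕ, ∃ b : ℕ → A, b 0 = x ∧ b t = y ∧
      0 < ∏ i ∈ Finset.range t, Q (b i) (b (i + 1)))
    (hQhat : ∀ x y, Qhat x y = π y * Q y x / π x)
    (hX : IsChainLaw P X μ Q) (hY : IsChainLaw P' Y η Qhat)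
    (f : ℕ → ℝ≥0∞) (n : ℕ) (hn : 1 ≤ n) :
    ∫⁻ ω, (η (X n ω) / π (X n ω)) *
        f (∑ i ∈ Finset.range n, if X i ω = X n ω then 1 else 0) ∂P =
      ∫⁻ ω, (μ (Y n ω) / π (Y n ω)) *
        f ((∑ i ∈ Finset.range (n + 1), if Y i ω = Y 0 ω then 1 else 0) - 1) ∂P' :=
  lemma_taun_general P P' X Y Q Qhat π μ η hQ hμ hη hπpos hπfin hstat hQhat hX hY f n
end

section
/- Let P = (p_k)_{k≥1} be a probability distribution on ℕ_+ whose counting function ν(ε) = Σ_k 1{p_k ≥ ε} satisfies ν(ε)/(ε^{−α}ℓ(1/ε)) → 1 as ε → 0, for some α ∈ (0,1) and slowly varying ℓ. Then for all r ≥ 0: lim_{n→∞} C(n,r) Σ_{k=1}^∞ p_k^{r+1} (1 − p_k)^{n−r} / ( n^{α−1} ℓ(n) ) = αΓ(r+1−α)/r!. -/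
open Filter

/-- `ℓ` is slowly varying at `+∞`: `ℓ(cx)/ℓ(x) → 1` for every `c > 0`. -/
def SlowlyVarying (ℓ : ℝ → ℝ) : Prop :=
  ∀ c : ℝ, 0 < c → Tendsto (fun x => ℓ (c * x) / ℓ x) atTop (nhds 1)

open scoped Classical in
/-- The (real-valued) counting function `ν(ε) = Σ_k 1{p_k ≥ ε}` of a distribution `p`. -/
noncomputable def nuR (p : ℕ → ℝ) (ε : ℝ) : ℝ :=
  ∑' k, if ε ≤ p k then (1 : ℝ) else 0

/-!
With `f(x) = C(n,r) x^(r+1) (1-x)^(n-r)`, the layer-cake formula and the substitution `x = t/n` give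
`n^(1-α) ℓ(n)⁻¹ Σ_k f(p_k) = ∫_0^∞ ν(t/n) / (n^α ℓ(n)) · f'(t/n) dt`.
Regular variation gives `ν(t/n) / (n^α ℓ(n)) → t^(-α)`, and since `f' = (r+1)(b_{n,r} - b_{n,r+1})`
is a difference of Bernstein polynomials, the Poisson limit theorem gives
`f'(t/n) → t^r e^(-t) (r+1-t) / r!`. Monotonicity of `ν` and the doubling property
`ν(ε/2) / ν(ε) → 2^α` yield a Potter bound `ν(t/n) / (n^α ℓ(n)) ≤ C (t^(-β) + 1)` for a fixed
`β ∈ (α, 1)`, which makes dominated convergence applicable. The limit integral is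
`((r+1) Γ(r+1-α) - Γ(r+2-α)) / r! = α Γ(r+1-α) / r!`.
-/

open Topology MeasureTheory Set Real
open scoped Nat

section CountingFunction

variable {p : ℕ → ℝ}

lemma summable_ite_le_of_summable (hp : Summable p) {x : ℝ} (hx : 0 < x) :
    Summable fun k => if x ≤ p k then (1 : ℝ) else 0 := by
  have hfin : {k | ¬p k < x}.Finite := hp.tendsto_cofinite_zero.eventually (gt_mem_nhds hx)
  refine summable_of_hasFiniteSupport <| show Set.Finite _ from hfin.subset fun k hk => ?_
  simp only [Function.mem_support, ne_eq, ite_eq_right_iff, not_forall] at hk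
  exact not_lt.2 hk.1

lemma nuR_nonneg (p : ℕ → ℝ) (x : ℝ) : 0 ≤ nuR p x :=
  tsum_nonneg fun _ => by positivity

lemma antitoneOn_nuR (hp : Summable p) : AntitoneOn (nuR p) (Ioi 0) := by
  intro x hx y hy hxy
  refine Summable.tsum_le_tsum (fun k => ?_) (summable_ite_le_of_summable hp hy)
    (summable_ite_le_of_summable hp hx)
  split_ifs with hyk hxk <;> first | exact absurd (hxy.trans hyk) hxk | norm_num

lemma nuR_eq_zero_of_forall_lt {x : ℝ} (h : ∀ k, p k < x) : nuR p x = 0 := by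
  simp [nuR, not_le.2 (h _)]

theorem tsum_comp_eq_integral_nuR (hpnn : ∀ k, 0 ≤ p k) (hp : Summable p) {f f' : ℝ → ℝ}
    (hf : ∀ x, HasDerivAt f (f' x) x) (hf' : Continuous f') (hf0 : f 0 = 0) :
    ∑' k, f (p k) = ∫ x in Ioi 0, nuR p x * f' x := by
  obtain ⟨M, hM⟩ := (isCompact_Icc (a := 0) (b := ∑' k, p k)).exists_bound_of_continuousOn
    hf'.continuousOn
  set F : ℕ → ℝ → ℝ := fun k => (Ioc 0 (p k)).indicator f'
  have hF_int (k : ℕ) : Integrable (F k) :=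
    (integrable_indicator_iff measurableSet_Ioc).2 hf'.integrableOn_Ioc
  have hF_eq (k : ℕ) : ∫ x, F k x = f (p k) := by
    rw [integral_indicator measurableSet_Ioc, ← intervalIntegral.integral_of_le (hpnn k),
      intervalIntegral.integral_eq_sub_of_hasDerivAt (fun x _ => hf x)
        (hf'.intervalIntegrable _ _), hf0, sub_zero]
  have hF_norm (k : ℕ) : ∫ x, ‖F k x‖ ≤ M * p k := by
    simp only [F, norm_indicator_eq_indicator_norm]
    rw [integral_indicator measurableSet_Ioc]
    calc ∫ x in Ioc 0 (p k), ‖f' x‖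
        ≤ ∫ _ in Ioc 0 (p k), M :=
          setIntegral_mono_on hf'.norm.integrableOn_Ioc (continuous_const.integrableOn_Ioc)
            measurableSet_Ioc fun x hx =>
              hM x ⟨hx.1.le, hx.2.trans (hp.le_tsum k fun j _ => hpnn j)⟩
      _ = M * p k := by
          rw [setIntegral_const, volume_real_Ioc_of_le (hpnn k), smul_eq_mul, sub_zero, mul_comm]
  have hF_sum : Summable fun k => ∫ x, ‖F k x‖ :=
    (hp.mul_left M).of_nonneg_of_le (fun k => integral_nonneg fun _ => norm_nonneg _) hF_norm
  have hF_tsum : (fun x => ∑' k, F k x) = (Ioi 0).indicator fun x => nuR p x * f' x := by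
    ext x
    by_cases hx : 0 < x
    · simp only [F, indicator_apply, mem_Ioc, mem_Ioi, hx, true_and, if_true, nuR,
        ← tsum_mul_right, ite_mul, one_mul, zero_mul]
    · simp [F, hx]
  calc ∑' k, f (p k) = ∑' k, ∫ x, F k x := by simp only [hF_eq]
    _ = ∫ x, ∑' k, F k x := integral_tsum_of_summable_integral_norm hF_int hF_sum
    _ = ∫ x in Ioi 0, nuR p x * f' x := by rw [hF_tsum, integral_indicator measurableSet_Ioi]

end CountingFunction

section OccupancyKernel

lemma bernsteinPolynomial_eval {R : Type*} [CommRing R] (n k : ℕ) (x : R) :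
    (bernsteinPolynomial R n k).eval x = n.choose k * x ^ k * (1 - x) ^ (n - k) := by
  simp [bernsteinPolynomial]

lemma bernsteinPolynomial_eval_nonneg (n k : ℕ) {x : ℝ} (h0 : 0 ≤ x) (h1 : x ≤ 1) :
    0 ≤ (bernsteinPolynomial ℝ n k).eval x := by
  have := sub_nonneg.2 h1
  rw [bernsteinPolynomial_eval]
  positivity

lemma bernsteinPolynomial_eval_div_le {n k : ℕ} (hn : 0 < n) (hk : 2 * k ≤ n) {t : ℝ}
    (ht : 0 ≤ t) (htn : t ≤ n) :
    (bernsteinPolynomial ℝ n k).eval (t / n) ≤ t ^ k * exp (-(t / 2)) := by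
  have hn' : (0 : ℝ) < n := Nat.cast_pos.2 hn
  have hx1 : 0 ≤ 1 - t / n := sub_nonneg.2 ((div_le_one hn').2 htn)
  have hchoose : (n.choose k : ℝ) * (t / n) ^ k ≤ t ^ k :=
    calc (n.choose k : ℝ) * (t / n) ^ k ≤ (n : ℝ) ^ k * (t / n) ^ k := by
          gcongr
          exact_mod_cast Nat.choose_le_pow n k
      _ = t ^ k := by rw [← mul_pow, mul_div_cancel₀ _ hn'.ne']
  have hpow : (1 - t / n) ^ (n - k) ≤ exp (-(t / 2)) :=
    calc (1 - t / n) ^ (n - k) ≤ exp (-(t / n)) ^ (n - k) :=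
          pow_le_pow_left₀ hx1 (one_sub_le_exp_neg _) _
      _ = exp (-((n - k : ℕ) * (t / n))) := by rw [← exp_nat_mul]; ring_nf
      _ ≤ exp (-(t / 2)) := by
          have hnk : (n : ℝ) / 2 ≤ (n - k : ℕ) := by
            rw [Nat.cast_sub (by omega)]
            have : (2 * k : ℕ) ≤ (n : ℝ) := by exact_mod_cast hk
            push_cast at this
            linarith
          have : t / 2 = n / 2 * (t / n) := by field_simp
          gcongr
          rw [this]
          gcongr
  rw [bernsteinPolynomial_eval]
  exact mul_le_mul hchoose hpow (by positivity) (by positivity)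

noncomputable def occupancyKernel (n r : ℕ) (x : ℝ) : ℝ :=
  (r + 1) * ((bernsteinPolynomial ℝ n r).eval x - (bernsteinPolynomial ℝ n (r + 1)).eval x)

lemma hasDerivAt_occupancyKernel (n r : ℕ) (x : ℝ) :
    HasDerivAt (fun y : ℝ => n.choose r * (y ^ (r + 1) * (1 - y) ^ (n - r)))
      (occupancyKernel n r x) x := by
  have hchoose : ((n + 1 : ℕ) : ℝ) * n.choose r = (n + 1).choose (r + 1) * (r + 1 : ℕ) := by
    exact_mod_cast Nat.add_one_mul_choose_eq n r
  push_cast at hchoose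
  have hB : (fun y : ℝ => n.choose r * (y ^ (r + 1) * (1 - y) ^ (n - r))) =
      fun y => (r + 1) / (n + 1) * (bernsteinPolynomial ℝ (n + 1) (r + 1)).eval y := by
    ext y
    rw [bernsteinPolynomial_eval, Nat.add_sub_add_right]
    field_simp
    linear_combination y ^ (r + 1) * (1 - y) ^ (n - r) * hchoose
  have h := (Polynomial.hasDerivAt (bernsteinPolynomial ℝ (n + 1) (r + 1)) x).const_mul
    ((r + 1) / (n + 1) : ℝ)
  rw [bernsteinPolynomial.derivative_succ] at h
  rw [hB]
  refine h.congr_deriv ?_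
  simp only [Nat.add_sub_cancel, Polynomial.eval_mul, Polynomial.eval_sub,
    Polynomial.eval_natCast, occupancyKernel]
  push_cast
  field_simp

lemma abs_occupancyKernel_div_le {n r : ℕ} (hn : 2 * (r + 1) ≤ n) {t : ℝ} (ht : 0 ≤ t)
    (htn : t ≤ n) :
    |occupancyKernel n r (t / n)| ≤ (r + 1) * ((t ^ r + t ^ (r + 1)) * exp (-(t / 2))) := by
  have hn0 : 0 < n := by omega
  have hx0 : 0 ≤ t / n := by positivity
  have hx1 : t / n ≤ 1 := (div_le_one (Nat.cast_pos.2 hn0)).2 htn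
  rw [occupancyKernel, abs_mul, abs_of_pos (by positivity : (0 : ℝ) < r + 1)]
  refine mul_le_mul_of_nonneg_left ((abs_sub _ _).trans ?_) (by positivity)
  rw [add_mul, abs_of_nonneg (bernsteinPolynomial_eval_nonneg _ _ hx0 hx1),
    abs_of_nonneg (bernsteinPolynomial_eval_nonneg _ _ hx0 hx1)]
  exact add_le_add (bernsteinPolynomial_eval_div_le hn0 (by omega) ht htn)
    (bernsteinPolynomial_eval_div_le hn0 hn ht htn)

lemma tendsto_bernsteinPolynomial_eval_div (k : ℕ) (t : ℝ) :
    Tendsto (fun n : ℕ => (bernsteinPolynomial ℝ n k).eval (t / n)) atTop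
      (𝓝 (exp (-t) * t ^ k / k !)) := by
  simp only [bernsteinPolynomial_eval]
  refine ProbabilityTheory.tendsto_choose_mul_pow_of_tendsto_mul_atTop k
    (tendsto_const_nhds.congr' ?_)
  filter_upwards [eventually_ne_atTop 0] with n hn
  rw [mul_div_cancel₀ _ (Nat.cast_ne_zero.2 hn)]

lemma tendsto_occupancyKernel_div (r : ℕ) (t : ℝ) :
    Tendsto (fun n : ℕ => occupancyKernel n r (t / n)) atTop
      (𝓝 (t ^ r * exp (-t) * (r + 1 - t) / r !)) := by
  have hlim : t ^ r * exp (-t) * (r + 1 - t) / r ! =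
      (r + 1) * ((exp (-t) * t ^ r / r !) - exp (-t) * t ^ (r + 1) / (r + 1)!) := by
    rw [Nat.factorial_succ]
    push_cast
    field_simp
    ring
  rw [hlim]
  exact ((tendsto_bernsteinPolynomial_eval_div r t).sub
    (tendsto_bernsteinPolynomial_eval_div (r + 1) t)).const_mul _

variable {p : ℕ → ℝ}

theorem choose_mul_tsum_eq_integral (hpnn : ∀ k, 0 ≤ p k) (hp : Summable p) (r : ℕ) {n : ℕ}
    (hn : 0 < n) :
    (n.choose r : ℝ) * ∑' k, p k ^ (r + 1) * (1 - p k) ^ (n - r) =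
      (n : ℝ)⁻¹ * ∫ t in Ioi 0, nuR p (t / n) * occupancyKernel n r (t / n) := by
  have hscale := integral_comp_mul_left_Ioi (fun x => nuR p x * occupancyKernel n r x) 0
    (inv_pos.2 (Nat.cast_pos.2 hn : (0 : ℝ) < n))
  simp only [mul_zero, inv_inv, smul_eq_mul, ← div_eq_inv_mul] at hscale
  have hlayer := tsum_comp_eq_integral_nuR hpnn hp (hasDerivAt_occupancyKernel n r)
    (by unfold occupancyKernel; fun_prop) (by simp)
  rw [← tsum_mul_left, hlayer, hscale, inv_mul_cancel_left₀ (by positivity)]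

end OccupancyKernel

section RegularVariation

lemma eventually_pos_and_le_two_mul_of_tendsto_div {β : Type*} {l : Filter β} {u U : β → ℝ}
    (h : Tendsto (fun x => u x / U x) l (𝓝 1)) (hnn : ∀ x, 0 ≤ u x) :
    ∀ᶠ x in l, 0 < u x ∧ 0 < U x ∧ u x ≤ 2 * U x := by
  filter_upwards [h.eventually (Ioo_mem_nhds one_half_lt_one one_lt_two)] with x ⟨hlo, hhi⟩
  have hpos : 0 < u x ∧ 0 < U x := by
    rcases div_pos_iff.1 (one_half_pos.trans hlo) with h | ⟨hu, -⟩
    · exact h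
    · exact absurd (hnn x) hu.not_ge
  exact ⟨hpos.1, hpos.2, ((div_lt_iff₀ hpos.2).1 hhi).le⟩

lemma le_two_rpow_mul_rpow_mul_of_doubling {u : ℝ → ℝ} {x₀ β : ℝ} (hx₀ : 0 ≤ x₀) (hβ : 0 ≤ β)
    (hmono : MonotoneOn u (Ici x₀)) (hnn : ∀ x ≥ x₀, 0 ≤ u x)
    (hdoubling : ∀ x ≥ x₀, u (2 * x) ≤ 2 ^ β * u x) {x : ℝ} (hx : x₀ ≤ x) {s : ℝ} (hs : 1 ≤ s) :
    u (s * x) ≤ 2 ^ β * s ^ β * u x := by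
  have hmem {c : ℝ} (hc : 1 ≤ c) : x₀ ≤ c * x := hx.trans (le_mul_of_one_le_left (hx₀.trans hx) hc)
  obtain ⟨j, hj⟩ := pow_unbounded_of_one_lt s one_lt_two
  induction j generalizing s with
  | zero => exact absurd hj (by simpa using hs)
  | succ j ih =>
    rcases le_or_gt s 2 with hs2 | hs2
    · calc u (s * x) ≤ u (2 * x) :=
            hmono (hmem hs) (hmem one_le_two) (mul_le_mul_of_nonneg_right hs2 (hx₀.trans hx))
        _ ≤ 2 ^ β * u x := hdoubling x hx
        _ ≤ 2 ^ β * s ^ β * u x := by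
            rw [mul_assoc]
            gcongr
            exact le_mul_of_one_le_left (hnn x hx) (one_le_rpow hs hβ)
    · have hs' : 1 ≤ s / 2 := by linarith
      calc u (s * x) = u (2 * (s / 2 * x)) := by ring_nf
        _ ≤ 2 ^ β * u (s / 2 * x) := hdoubling _ (hmem hs')
        _ ≤ 2 ^ β * (2 ^ β * (s / 2) ^ β * u x) := by
            gcongr
            exact ih hs' (by rw [pow_succ] at hj; linarith)
        _ = 2 ^ β * s ^ β * u x := by
            rw [div_rpow (by linarith) zero_le_two]
            field_simp

variable {u ℓ : ℝ → ℝ} {α : ℝ}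

lemma tendsto_comp_div_div_rpow_mul (hsv : SlowlyVarying ℓ)
    (hu : Tendsto (fun x => u x / (x ^ α * ℓ x)) atTop (𝓝 1)) {t : ℝ} (ht : 0 < t) :
    Tendsto (fun x => u (x / t) / (x ^ α * ℓ x)) atTop (𝓝 (t ^ (-α))) := by
  have hU : ∀ᶠ x in atTop, x ^ α * ℓ x ≠ 0 := by
    filter_upwards [hu.eventually_ne one_ne_zero] with x hx h
    simp [h] at hx
  have hdiv : Tendsto (fun x => x / t) atTop atTop := tendsto_id.atTop_div_const ht
  have h := ((hu.comp hdiv).mul (hsv t⁻¹ (inv_pos.2 ht))).const_mul (t ^ (-α))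
  rw [mul_one, mul_one] at h
  refine h.congr' ?_
  filter_upwards [hU, hdiv.eventually hU, eventually_gt_atTop 0] with x hx hxt hx0
  simp only [Function.comp_apply, inv_mul_eq_div] at hxt ⊢
  rw [div_rpow hx0.le ht.le] at hxt ⊢
  have hℓ : ℓ (x / t) ≠ 0 := right_ne_zero_of_mul hxt
  rw [rpow_neg ht.le]
  field_simp

lemma eventually_le_two_rpow_mul_rpow_mul (hsv : SlowlyVarying ℓ)
    (hu : Tendsto (fun x => u x / (x ^ α * ℓ x)) atTop (𝓝 1)) (hnn : ∀ x, 0 ≤ u x)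
    (hmono : MonotoneOn u (Ioi 0)) {β : ℝ} (hβ : 0 ≤ β) (hαβ : α < β) :
    ∀ᶠ x in atTop, ∀ s ≥ 1, u (s * x) ≤ 2 ^ β * s ^ β * u x := by
  have hratio : Tendsto (fun x => u (2 * x) / (x ^ α * ℓ x) / (u x / (x ^ α * ℓ x))) atTop
      (𝓝 (2 ^ α)) := by
    have h := (tendsto_comp_div_div_rpow_mul hsv hu (inv_pos.2 two_pos)).div hu one_ne_zero
    rw [inv_rpow zero_le_two, rpow_neg zero_le_two, inv_inv, div_one] at h
    exact h.congr fun x => by rw [Pi.div_apply, div_inv_eq_mul, mul_comm]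
  have hdoubling : ∀ᶠ x in atTop, u (2 * x) ≤ 2 ^ β * u x := by
    filter_upwards [hratio.eventually (gt_mem_nhds (rpow_lt_rpow_of_exponent_lt one_lt_two hαβ)),
      eventually_pos_and_le_two_mul_of_tendsto_div hu hnn] with x hx ⟨hux, hUx, _⟩
    rw [div_div_div_cancel_right₀ hUx.ne', div_lt_iff₀ hux] at hx
    exact hx.le
  obtain ⟨x₀, hx₀⟩ := eventually_atTop.1 hdoubling
  filter_upwards [eventually_ge_atTop (max x₀ 1)] with x hx s hs
  have hx₁ : (0 : ℝ) < max x₀ 1 := lt_max_of_lt_right one_pos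
  exact le_two_rpow_mul_rpow_mul_of_doubling hx₁.le hβ
    (hmono.mono fun y hy => hx₁.trans_le hy) (fun y _ => hnn y)
    (fun y hy => hx₀ y ((le_max_left _ _).trans hy)) hx hs

lemma exists_eventually_comp_div_div_le (hsv : SlowlyVarying ℓ)
    (hu : Tendsto (fun x => u x / (x ^ α * ℓ x)) atTop (𝓝 1)) (hnn : ∀ x, 0 ≤ u x)
    (hmono : MonotoneOn u (Ioi 0)) {β : ℝ} (hβ : 0 ≤ β) (hαβ : α < β) :
    ∃ C ≥ 0, ∀ᶠ x in atTop, ∀ t > 0, u (x / t) / (x ^ α * ℓ x) ≤ C * (t ^ (-β) + 1) := by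
  refine ⟨2 * 2 ^ β, by positivity, ?_⟩
  filter_upwards [eventually_le_two_rpow_mul_rpow_mul hsv hu hnn hmono hβ hαβ,
    eventually_pos_and_le_two_mul_of_tendsto_div hu hnn, eventually_gt_atTop 0]
    with x hpotter ⟨_, hU, hle⟩ hx t ht
  have h2β : 1 ≤ (2 : ℝ) ^ β := one_le_rpow one_le_two hβ
  have htβ : 0 ≤ t ^ (-β) := by positivity
  rw [div_le_iff₀ hU]
  rcases le_or_gt t 1 with ht1 | ht1
  · have h := hpotter t⁻¹ (one_le_inv₀ ht |>.2 ht1)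
    rw [inv_mul_eq_div, inv_rpow ht.le, ← rpow_neg ht.le] at h
    calc u (x / t) ≤ 2 ^ β * t ^ (-β) * u x := h
      _ ≤ 2 ^ β * t ^ (-β) * (2 * (x ^ α * ℓ x)) := by gcongr
      _ ≤ 2 * 2 ^ β * (t ^ (-β) + 1) * (x ^ α * ℓ x) := by nlinarith
  · calc u (x / t) ≤ u x := hmono (div_pos hx ht) hx (div_le_self hx.le ht1.le)
      _ ≤ 2 * (x ^ α * ℓ x) := hle
      _ ≤ 2 * 2 ^ β * (t ^ (-β) + 1) * (x ^ α * ℓ x) := by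
          have h1 : 1 ≤ 2 ^ β * (t ^ (-β) + 1) := by nlinarith
          nlinarith [mul_le_mul_of_nonneg_right h1 hU.le]

end RegularVariation

section GammaIntegrals

variable {α : ℝ}

lemma rpow_neg_mul_pow_mul_eq {t : ℝ} (ht : 0 < t) (k : ℕ) (c : ℝ) :
    t ^ (-α) * (t ^ k * c) = t ^ ((k + 1 - α) - 1) * c := by
  rw [show (k : ℝ) + 1 - α - 1 = k + -α by ring, rpow_add ht, rpow_natCast]
  ring

lemma integrableOn_rpow_neg_mul_pow_mul_exp_neg {k : ℕ} (hα : α < k + 1) {s : ℝ} (hs : 0 < s) :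
    IntegrableOn (fun t => t ^ (-α) * (t ^ k * exp (-(s * t)))) (Ioi 0) := by
  have h := integrableOn_rpow_mul_exp_neg_mul_rpow (p := 1) (s := k + 1 - α - 1) (by linarith)
    one_pos hs
  refine h.congr_fun (fun t ht => ?_) measurableSet_Ioi
  simp only [rpow_neg_mul_pow_mul_eq ht, rpow_one, neg_mul]

lemma integral_rpow_neg_mul_pow_mul_exp_neg {k : ℕ} (hα : α < k + 1) :
    ∫ t in Ioi 0, t ^ (-α) * (t ^ k * exp (-t)) = Gamma (k + 1 - α) := by
  rw [Gamma_eq_integral (by linarith)]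
  refine setIntegral_congr_fun measurableSet_Ioi fun t ht => ?_
  rw [rpow_neg_mul_pow_mul_eq ht, mul_comm]

lemma integral_rpow_neg_mul_occupancyLimit {r : ℕ} (hα : α < r + 1) :
    ∫ t in Ioi 0, t ^ (-α) * (t ^ r * exp (-t) * (r + 1 - t) / r !) =
      α * Gamma (r + 1 - α) / r ! := by
  have hα' : α < (r + 1 : ℕ) + 1 := by push_cast; linarith
  have hint (k : ℕ) (hk : α < k + 1) :=
    integrableOn_rpow_neg_mul_pow_mul_exp_neg hk one_pos
  simp only [one_mul] at hint
  have hsplit : (fun t : ℝ => t ^ (-α) * (t ^ r * exp (-t) * (r + 1 - t) / r !)) = fun t =>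
      ((r + 1) * (t ^ (-α) * (t ^ r * exp (-t))) - t ^ (-α) * (t ^ (r + 1) * exp (-t))) / r ! := by
    ext t
    ring
  rw [hsplit, integral_div, integral_sub ((hint r hα).const_mul _) (hint _ hα'),
    integral_const_mul, integral_rpow_neg_mul_pow_mul_exp_neg hα,
    integral_rpow_neg_mul_pow_mul_exp_neg hα', Nat.cast_succ,
    show (r : ℝ) + 1 + 1 - α = (r + 1 - α) + 1 by ring, Gamma_add_one (by linarith)]
  ring

lemma integrableOn_rpow_neg_add_one_mul_pow_add_pow_mul_exp {β : ℝ} (hβ : β < 1) (r : ℕ) :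
    IntegrableOn (fun t => (t ^ (-β) + 1) * ((t ^ r + t ^ (r + 1)) * exp (-(t / 2)))) (Ioi 0) := by
  have h (k : ℕ) (γ : ℝ) (hγ : γ < k + 1) :=
    integrableOn_rpow_neg_mul_pow_mul_exp_neg hγ (one_half_pos (α := ℝ))
  have hr : (0 : ℝ) ≤ r := r.cast_nonneg
  refine ((((h r β (by linarith)).add (h (r + 1) β (by push_cast; linarith))).add
    (h r 0 (by linarith))).add (h (r + 1) 0 (by push_cast; linarith))).congr_fun
    (fun t ht => ?_) measurableSet_Ioi
  simp only [Pi.add_apply, neg_zero, rpow_zero]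
  ring_nf

end GammaIntegrals

section Abelian

variable {u ℓ : ℝ → ℝ} {α : ℝ}

theorem tendsto_integral_comp_div_mul_occupancyKernel (hα : α ∈ Ioo 0 1)
    (hsv : SlowlyVarying ℓ) (hu : Tendsto (fun x => u x / (x ^ α * ℓ x)) atTop (𝓝 1))
    (hnn : ∀ x, 0 ≤ u x) (hmono : MonotoneOn u (Ioi 0)) (hzero : ∀ x ∈ Ioo 0 1, u x = 0)
    (r : ℕ) :
    Tendsto (fun n : ℕ => ∫ t in Ioi 0, u (n / t) / (n ^ α * ℓ n) * occupancyKernel n r (t / n))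
      atTop (𝓝 (α * Gamma (r + 1 - α) / r !)) := by
  obtain ⟨hα0, hα1⟩ := hα
  have hαβ : α < (1 + α) / 2 := by linarith
  have hβ1 : (1 + α) / 2 < 1 := by linarith
  set β := (1 + α) / 2
  obtain ⟨C, hC0, hC⟩ :=
    exists_eventually_comp_div_div_le hsv hu hnn hmono (hα0.trans hαβ).le hαβ
  rw [← integral_rpow_neg_mul_occupancyLimit (by linarith)]
  refine tendsto_integral_filter_of_dominated_convergence
    (fun t => C * (r + 1) * ((t ^ (-β) + 1) * ((t ^ r + t ^ (r + 1)) * exp (-(t / 2)))))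
    ?_ ?_ ((integrableOn_rpow_neg_add_one_mul_pow_add_pow_mul_exp hβ1 r).const_mul _)
    ((ae_restrict_iff' measurableSet_Ioi).2 (ae_of_all _ fun t ht =>
      ((tendsto_comp_div_div_rpow_mul hsv hu ht).comp tendsto_natCast_atTop_atTop).mul
        (tendsto_occupancyKernel_div r t)))
  · filter_upwards [eventually_gt_atTop 0] with n hn
    have hn' : (0 : ℝ) < n := Nat.cast_pos.2 hn
    have hanti : AntitoneOn (fun t => u (n / t)) (Ioi 0) := fun a ha b hb hab =>
      hmono (div_pos hn' hb) (div_pos hn' ha) (div_le_div_of_nonneg_left hn'.le ha hab)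
    have hK : Continuous fun t : ℝ => occupancyKernel n r (t / n) := by
      unfold occupancyKernel; fun_prop
    exact (((aemeasurable_restrict_of_antitoneOn measurableSet_Ioi hanti).div_const _).mul
      hK.aemeasurable).aestronglyMeasurable
  · filter_upwards [tendsto_natCast_atTop_atTop.eventually hC,
      tendsto_natCast_atTop_atTop.eventually (eventually_pos_and_le_two_mul_of_tendsto_div hu hnn),
      eventually_ge_atTop (2 * (r + 1))] with n hCn ⟨_, hUn, _⟩ hn
    refine (ae_restrict_iff' measurableSet_Ioi).2 (ae_of_all _ fun t (ht : 0 < t) => ?_)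
    have hn' : (0 : ℝ) < n := Nat.cast_pos.2 (by omega)
    rw [norm_mul, Real.norm_of_nonneg (div_nonneg (hnn _) hUn.le), Real.norm_eq_abs]
    rcases le_or_gt t n with htn | htn
    · calc _ ≤ C * (t ^ (-β) + 1) * ((r + 1) * ((t ^ r + t ^ (r + 1)) * exp (-(t / 2)))) :=
            mul_le_mul (hCn t ht) (abs_occupancyKernel_div_le hn ht.le htn) (abs_nonneg _)
              (by positivity)
        _ = _ := by ring
    · -- the kernel is not controlled beyond `t = n`, but there `u (n / t)` vanishes
      rw [hzero _ ⟨div_pos hn' ht, (div_lt_one ht).2 htn⟩, zero_div, zero_mul]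
      positivity

end Abelian

/-- Karlin's asymptotic, Proposition A.1 for α ∈ (0,1): if the counting
function of `P = (p_k)` satisfies `ν(ε) ∼ ε^{−α}ℓ(1/ε)` as `ε → 0` with `α ∈ (0,1)` and
`ℓ` slowly varying, then for all `r ≥ 0`,
`binom(n,r) Σ_k p_k^{r+1} (1 − p_k)^{n−r} / (n^{α−1}ℓ(n)) → αΓ(r+1−α)/r!`. -/
theorem karlin_RV_asymptotics (p : ℕ → ℝ) (hpnn : ∀ k, 0 ≤ p k) (hp : HasSum p 1)
    (α : ℝ) (hα : α ∈ Set.Ioo (0 : ℝ) 1)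
    (ℓ : ℝ → ℝ) (hsv : SlowlyVarying ℓ)
    (hν : Tendsto (fun ε : ℝ => nuR p ε / (ε ^ (-α) * ℓ (1 / ε)))
      (nhdsWithin 0 (Set.Ioi 0)) (nhds 1))
    (r : ℕ) :
    Tendsto (fun n : ℕ =>
        ((n.choose r : ℝ) * ∑' k, p k ^ (r + 1) * (1 - p k) ^ (n - r)) /
          ((n : ℝ) ^ (α - 1) * ℓ n))
      atTop (nhds (α * Real.Gamma (r + 1 - α) / (r.factorial : ℝ))) := by
  have hu : Tendsto (fun x => nuR p x⁻¹ / (x ^ α * ℓ x)) atTop (𝓝 1) := by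
    refine (hν.comp tendsto_inv_atTop_nhdsGT_zero).congr' ?_
    filter_upwards [eventually_gt_atTop 0] with x hx
    simp [inv_rpow hx.le, rpow_neg hx.le]
  have hmono : MonotoneOn (fun x => nuR p x⁻¹) (Ioi 0) := fun x hx y hy hxy =>
    antitoneOn_nuR hp.summable (inv_pos.2 hy : 0 < y⁻¹) (inv_pos.2 hx : 0 < x⁻¹)
      (inv_anti₀ hx hxy)
  have hzero : ∀ x ∈ Ioo 0 1, nuR p x⁻¹ = 0 := fun x hx => nuR_eq_zero_of_forall_lt fun k =>
    (le_hasSum hp k fun j _ => hpnn j).trans_lt ((one_lt_inv₀ hx.1).2 hx.2)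
  refine (tendsto_integral_comp_div_mul_occupancyKernel hα hsv hu (fun _ => nuR_nonneg p _)
    hmono hzero r).congr' ?_
  filter_upwards [eventually_gt_atTop 0] with n hn
  simp only [inv_div, div_mul_eq_mul_div, integral_div]
  rw [choose_mul_tsum_eq_integral hpnn hp.summable r hn, rpow_sub_one (by positivity)]
  field_simp
end

section
/- Fix α ∈ (0,1) and slowly varying ℓ, and let P = (p_k) be a probability distribution on ℕ_+ whose counting function satisfies lim_{ε→0} ν(ε)/(ε^{−α}ℓ(1/ε)) = 0. Then for all r ≥ 0: lim_{n→∞} C(n,r) Σ_{k=1}^∞ p_k^{r+1}(1 − p_k)^{n−r} / ( n^{α−1} ℓ(n) ) = 0. -/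
/-!
For `0 ≤ x ≤ 1` both `C(n,r) x^r (1-x)^(n-r)` and `C(n+1,r+1) x^(r+1) (1-x)^(n-r)` are binomial
probabilities, so `C(n,r) x^(r+1) (1-x)^(n-r) ≤ min (x, (r+1)/(n+1))` and the numerator is at most
`T((r+1)/n)`, where `T(ε) = ∑ₖ min (pₖ, ε)`. Comparing consecutive dyadic scales gives
`T(2u) ≤ T(u) + u ν(u)`. Since `ν(u) = o(u^(-α) ℓ(1/u))` and, by Potter's bound,
`|ℓ(2^m x)| ≤ K^m |ℓ(x)|` for any fixed `K > 1` and large `x`, choosing `K < 2^(1-α)` makes the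
dyadic contributions decay geometrically, whence `T(ε) = o(ε^(1-α) ℓ(1/ε))`. At `ε = (r+1)/n` the
right side is `O(n^(α-1) ℓ(n))` because `ℓ(n/(r+1)) = O(ℓ(n))`.
-/

open Filter

open Topology Asymptotics

namespace SlowlyVarying

variable {ℓ : ℝ → ℝ}

lemma eventually_ne_zero (h : SlowlyVarying ℓ) : ∀ᶠ x in atTop, ℓ x ≠ 0 := by
  have h1 := h 1 one_pos
  simp only [one_mul] at h1
  filter_upwards [h1.eventually_ne one_ne_zero] with x hx h0
  simp [h0] at hx

lemma eventually_abs_le_mul (h : SlowlyVarying ℓ) {c K : ℝ} (hc : 0 < c) (hK : 1 < K) :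
    ∀ᶠ x in atTop, |ℓ (c * x)| ≤ K * |ℓ x| := by
  have hratio : ∀ᶠ x in atTop, |ℓ (c * x) / ℓ x| < K := by
    simpa using (h c hc).abs.eventually (gt_mem_nhds (by simpa using hK))
  filter_upwards [hratio, h.eventually_ne_zero] with x hx hx0
  rw [abs_div, div_lt_iff₀ (abs_pos.2 hx0)] at hx
  exact hx.le

lemma eventually_abs_two_pow_mul_le (h : SlowlyVarying ℓ) {K : ℝ} (hK : 1 < K) :
    ∀ᶠ x in atTop, ∀ m : ℕ, |ℓ (2 ^ m * x)| ≤ K ^ m * |ℓ x| := by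
  obtain ⟨X, hX⟩ := eventually_atTop.1 (h.eventually_abs_le_mul two_pos hK)
  filter_upwards [eventually_ge_atTop (max X 0)] with x hx m
  induction m with
  | zero => simp
  | succ m ih =>
    have hmX : X ≤ 2 ^ m * x :=
      (le_max_left _ _).trans <| hx.trans <|
        le_mul_of_one_le_left ((le_max_right _ _).trans hx) (one_le_pow₀ one_le_two)
    calc |ℓ (2 ^ (m + 1) * x)| = |ℓ (2 * (2 ^ m * x))| := by rw [pow_succ', mul_assoc]
      _ ≤ K * |ℓ (2 ^ m * x)| := hX _ hmX
      _ ≤ K * (K ^ m * |ℓ x|) := by gcongr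
      _ = K ^ (m + 1) * |ℓ x| := by ring

lemma isBigO_comp_mul (h : SlowlyVarying ℓ) {c : ℝ} (hc : 0 < c) :
    (fun x => ℓ (c * x)) =O[atTop] ℓ :=
  IsBigO.of_bound 2 <| by simpa using h.eventually_abs_le_mul hc one_lt_two

lemma isBigO_div_rpow_mul (h : SlowlyVarying ℓ) {c : ℝ} (hc : 0 < c) (α : ℝ) :
    (fun x => (c / x) ^ (1 - α) * ℓ (1 / (c / x))) =O[atTop] fun x => x ^ (α - 1) * ℓ x := by
  have hO : (fun x => c ^ (1 - α) * (x ^ (α - 1) * ℓ (c⁻¹ * x))) =O[atTop]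
      fun x => x ^ (α - 1) * ℓ x :=
    ((isBigO_refl _ _).mul (h.isBigO_comp_mul (inv_pos.2 hc))).const_mul_left _
  refine hO.congr' ?_ EventuallyEq.rfl
  filter_upwards [eventually_gt_atTop 0] with x hx
  rw [Real.div_rpow hc.le hx.le, one_div_div, div_eq_inv_mul x c,
    show α - 1 = -(1 - α) by ring, Real.rpow_neg hx.le]
  ring

end SlowlyVarying

lemma choose_mul_pow_mul_one_sub_pow_le_one {x : ℝ} (hx0 : 0 ≤ x) (hx1 : x ≤ 1) (n r : ℕ) :
    (n.choose r : ℝ) * x ^ r * (1 - x) ^ (n - r) ≤ 1 := by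
  rcases le_or_gt r n with hrn | hnr
  · calc (n.choose r : ℝ) * x ^ r * (1 - x) ^ (n - r)
          = x ^ r * (1 - x) ^ (n - r) * n.choose r := by ring
      _ ≤ ∑ m ∈ Finset.range (n + 1), x ^ m * (1 - x) ^ (n - m) * n.choose m :=
          Finset.single_le_sum (f := fun m => x ^ m * (1 - x) ^ (n - m) * (n.choose m : ℝ))
            (fun m _ => by have := sub_nonneg.2 hx1; positivity)
            (Finset.mem_range.2 (Nat.lt_succ_of_le hrn))
      _ = 1 := by rw [← add_pow, add_sub_cancel, one_pow]
  · simp [Nat.choose_eq_zero_of_lt hnr]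

lemma choose_mul_pow_succ_mul_one_sub_pow_le {x : ℝ} (hx0 : 0 ≤ x) (hx1 : x ≤ 1) (n r : ℕ) :
    (n.choose r : ℝ) * x ^ (r + 1) * (1 - x) ^ (n - r) ≤ min x ((r + 1) / (n + 1)) := by
  refine le_min ?_ ?_
  · calc (n.choose r : ℝ) * x ^ (r + 1) * (1 - x) ^ (n - r)
        = x * ((n.choose r : ℝ) * x ^ r * (1 - x) ^ (n - r)) := by ring
      _ ≤ x * 1 := by gcongr; exact choose_mul_pow_mul_one_sub_pow_le_one hx0 hx1 n r
      _ = x := mul_one x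
  · have hsucc := choose_mul_pow_mul_one_sub_pow_le_one hx0 hx1 (n + 1) (r + 1)
    rw [Nat.add_sub_add_right] at hsucc
    have hchoose : ((n : ℝ) + 1) * n.choose r = (n + 1).choose (r + 1) * ((r : ℝ) + 1) := by
      exact_mod_cast Nat.add_one_mul_choose_eq n r
    rw [le_div_iff₀ (by positivity)]
    calc (n.choose r : ℝ) * x ^ (r + 1) * (1 - x) ^ (n - r) * (n + 1)
        = ((n + 1).choose (r + 1) * x ^ (r + 1) * (1 - x) ^ (n - r)) * (r + 1) := by
          linear_combination x ^ (r + 1) * (1 - x) ^ (n - r) * hchoose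
      _ ≤ 1 * (r + 1) := by gcongr
      _ = r + 1 := one_mul _

lemma le_mul_div_one_sub_of_le_add_pow {a : ℕ → ℝ} {C β : ℝ} (ha : Tendsto a atTop (𝓝 0))
    (hβ0 : 0 ≤ β) (hβ1 : β < 1) (hstep : ∀ m, a m ≤ a (m + 1) + C * β ^ (m + 1)) :
    a 0 ≤ C * β / (1 - β) := by
  have hgeom : HasSum (fun j => C * β ^ (j + 1)) (C * β / (1 - β)) := by
    have h := (hasSum_geometric_of_lt_one hβ0 hβ1).mul_left (C * β)
    rw [← div_eq_mul_inv] at h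
    have hterm : (fun j : ℕ => C * β ^ (j + 1)) = fun j => C * β * β ^ j :=
      funext fun j => by ring
    rwa [hterm]
  refine le_of_tendsto_of_tendsto' (by simpa using tendsto_const_nhds.sub ha)
    hgeom.tendsto_sum_nat fun m => ?_
  rw [← Finset.sum_range_sub']
  exact Finset.sum_le_sum fun j _ => by linarith [hstep j]

/-- `∑ₖ min (pₖ, ε) = ∫_{[0,ε]} x ν_P(dx) + ε ν_P((ε,1])`, the quantity of the moment identity
for `q = 1`. -/
noncomputable def truncatedMass (p : ℕ → ℝ) (ε : ℝ) : ℝ :=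
  ∑' k, min (p k) ε

section truncatedMass

variable {p : ℕ → ℝ}

lemma summable_min_const (hp0 : ∀ k, 0 ≤ p k) (hs : Summable p) {ε : ℝ} (hε : 0 ≤ ε) :
    Summable fun k => min (p k) ε :=
  hs.of_nonneg_of_le (fun k => le_min (hp0 k) hε) fun _ => min_le_left _ _

lemma summable_ite_le (hp0 : ∀ k, 0 ≤ p k) (hs : Summable p) {ε : ℝ} (hε : 0 < ε) :
    Summable fun k => if ε ≤ p k then (1 : ℝ) else 0 := by
  refine (hs.mul_left ε⁻¹).of_nonneg_of_le (fun _ => by split_ifs <;> norm_num) fun k => ?_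
  split_ifs with h
  · rw [← inv_mul_cancel₀ hε.ne']
    gcongr
  · exact mul_nonneg (inv_nonneg.2 hε.le) (hp0 k)

lemma truncatedMass_two_mul_le (hp0 : ∀ k, 0 ≤ p k) (hs : Summable p) {u : ℝ} (hu : 0 < u) :
    truncatedMass p (2 * u) ≤ truncatedMass p u + u * nuR p u := by
  have hterm : ∀ k, min (p k) (2 * u) ≤ min (p k) u + u * if u ≤ p k then 1 else 0 := by
    intro k
    split_ifs with h
    · rw [min_eq_right h]
      linarith [min_le_right (p k) (2 * u)]
    · rw [min_eq_left (not_le.1 h).le, min_eq_left (by linarith [not_le.1 h])]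
      simp
  have hsum := (summable_min_const hp0 hs hu.le).add ((summable_ite_le hp0 hs hu).mul_left u)
  calc truncatedMass p (2 * u) ≤ ∑' k, (min (p k) u + u * if u ≤ p k then 1 else 0) :=
        (summable_min_const hp0 hs (by positivity)).tsum_le_tsum hterm hsum
    _ = truncatedMass p u + u * nuR p u := by
        rw [(summable_min_const hp0 hs hu.le).tsum_add ((summable_ite_le hp0 hs hu).mul_left u),
          tsum_mul_left]
        rfl

lemma tendsto_truncatedMass_nhdsGT_zero (hp0 : ∀ k, 0 ≤ p k) (hs : Summable p) :
    Tendsto (truncatedMass p) (𝓝[>] 0) (𝓝 0) := by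
  have hlim := tendsto_tsum_of_dominated_convergence (𝓕 := 𝓝[>] (0 : ℝ))
    (f := fun ε k => min (p k) ε) (g := fun _ => 0) hs
    (fun k => by
      have hk : Tendsto (fun ε : ℝ => min (p k) ε) (𝓝 0) (𝓝 (min (p k) 0)) :=
        (continuous_const.min continuous_id).tendsto 0
      simpa [min_eq_right (hp0 k)] using tendsto_nhdsWithin_of_tendsto_nhds hk)
    (by
      filter_upwards [self_mem_nhdsWithin] with ε hε k
      rw [Real.norm_of_nonneg (le_min (hp0 k) hε.le)]
      exact min_le_left _ _)
  rw [tsum_zero] at hlim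
  exact hlim

lemma truncatedMass_le_of_mul_nuR_le (hp0 : ∀ k, 0 ≤ p k) (hs : Summable p) {ε C β : ℝ}
    (hε : 0 < ε) (hβ0 : 0 ≤ β) (hβ1 : β < 1)
    (hν : ∀ m : ℕ, ε / 2 ^ (m + 1) * nuR p (ε / 2 ^ (m + 1)) ≤ C * β ^ (m + 1)) :
    truncatedMass p ε ≤ C * β / (1 - β) := by
  have hscales : Tendsto (fun m : ℕ => ε / 2 ^ m) atTop (𝓝[>] 0) :=
    tendsto_nhdsWithin_iff.2
      ⟨tendsto_const_nhds.div_atTop (tendsto_pow_atTop_atTop_of_one_lt one_lt_two),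
        Eventually.of_forall fun m => Set.mem_Ioi.2 (by positivity)⟩
  have hstep : ∀ m : ℕ, truncatedMass p (ε / 2 ^ m) ≤
      truncatedMass p (ε / 2 ^ (m + 1)) + C * β ^ (m + 1) := fun m => by
    have hhalf : ε / 2 ^ m = 2 * (ε / 2 ^ (m + 1)) := by rw [pow_succ]; field_simp
    rw [hhalf]
    exact (truncatedMass_two_mul_le hp0 hs (by positivity)).trans (by linarith [hν m])
  simpa using le_mul_div_one_sub_of_le_add_pow (a := fun m => truncatedMass p (ε / 2 ^ m))
    ((tendsto_truncatedMass_nhdsGT_zero hp0 hs).comp hscales) hβ0 hβ1 hstep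

lemma div_two_pow_mul_nuR_le {ℓ : ℝ → ℝ} {α c K ε : ℝ} (hε : 0 < ε) (hc : 0 ≤ c)
    (hν : ∀ u ∈ Set.Ioc 0 ε, nuR p u ≤ c * (u ^ (-α) * |ℓ (1 / u)|))
    (hℓ : ∀ m : ℕ, |ℓ (2 ^ m * ε⁻¹)| ≤ K ^ m * |ℓ ε⁻¹|) (m : ℕ) :
    ε / 2 ^ m * nuR p (ε / 2 ^ m) ≤ c * (ε ^ (1 - α) * |ℓ ε⁻¹|) * (K / 2 ^ (1 - α)) ^ m := by
  set u := ε / 2 ^ m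
  have hu : 0 < u := by positivity
  have hℓu : |ℓ (1 / u)| ≤ K ^ m * |ℓ ε⁻¹| := by
    rw [one_div_div, div_eq_mul_inv]
    exact hℓ m
  have hupow : u * u ^ (-α) = ε ^ (1 - α) / (2 ^ (1 - α)) ^ m := by
    rw [show u * u ^ (-α) = u ^ (1 - α) by
        rw [sub_eq_add_neg, Real.rpow_add hu, Real.rpow_one],
      Real.div_rpow hε.le (by positivity), ← Real.rpow_natCast_mul zero_le_two, mul_comm,
      Real.rpow_mul_natCast zero_le_two]
  calc u * nuR p u ≤ u * (c * (u ^ (-α) * (K ^ m * |ℓ ε⁻¹|))) := by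
        gcongr u * ?_
        exact (hν u ⟨hu, div_le_self hε.le (one_le_pow₀ one_le_two)⟩).trans (by gcongr)
    _ = c * (u * u ^ (-α)) * K ^ m * |ℓ ε⁻¹| := by ring
    _ = c * (ε ^ (1 - α) * |ℓ ε⁻¹|) * (K / 2 ^ (1 - α)) ^ m := by rw [hupow, div_pow]; ring

theorem truncatedMass_isLittleO (hp0 : ∀ k, 0 ≤ p k) (hs : Summable p) {α : ℝ} (hα : α < 1)
    {ℓ : ℝ → ℝ} (hℓ : SlowlyVarying ℓ)
    (hν : nuR p =o[𝓝[>] 0] fun ε => ε ^ (-α) * ℓ (1 / ε)) :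
    truncatedMass p =o[𝓝[>] 0] fun ε => ε ^ (1 - α) * ℓ (1 / ε) := by
  obtain ⟨K, hK, hKs⟩ := exists_between (Real.one_lt_rpow one_lt_two (sub_pos.2 hα))
  set β : ℝ := K / 2 ^ (1 - α)
  have hβ0 : 0 < β := by positivity
  have hβ1 : β < 1 := (div_lt_one (by positivity)).2 hKs
  refine IsLittleO.of_bound fun η hη => ?_
  set c : ℝ := η * (1 - β) / β with hc_def
  have hc : 0 < c := by have := sub_pos.2 hβ1; positivity
  obtain ⟨δ, hδ, hνδ⟩ := mem_nhdsGT_iff_exists_Ioo_subset.1 (hν.def hc)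
  filter_upwards [Ioo_mem_nhdsGT hδ,
    tendsto_inv_nhdsGT_zero.eventually (hℓ.eventually_abs_two_pow_mul_le hK)]
    with ε ⟨hε, hεδ⟩ hpotter
  have hνε : ∀ u ∈ Set.Ioc 0 ε, nuR p u ≤ c * (u ^ (-α) * |ℓ (1 / u)|) := fun u hu => by
    have h : ‖nuR p u‖ ≤ c * ‖u ^ (-α) * ℓ (1 / u)‖ := hνδ ⟨hu.1, hu.2.trans_lt hεδ⟩
    rw [norm_mul, Real.norm_of_nonneg (Real.rpow_nonneg hu.1.le _), Real.norm_eq_abs,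
      Real.norm_eq_abs] at h
    exact (le_abs_self _).trans h
  have hT := truncatedMass_le_of_mul_nuR_le hp0 hs hε hβ0.le hβ1 fun m =>
    div_two_pow_mul_nuR_le hε hc.le hνε hpotter (m + 1)
  have hT0 : 0 ≤ truncatedMass p ε := tsum_nonneg fun k => le_min (hp0 k) hε.le
  rw [Real.norm_of_nonneg hT0, norm_mul, Real.norm_of_nonneg (Real.rpow_nonneg hε.le _),
    Real.norm_eq_abs, one_div]
  calc truncatedMass p ε ≤ c * (ε ^ (1 - α) * |ℓ ε⁻¹|) * β / (1 - β) := hT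
    _ = η * (ε ^ (1 - α) * |ℓ ε⁻¹|) := by
        have := sub_pos.2 hβ1
        rw [hc_def]
        field_simp

end truncatedMass

lemma choose_mul_tsum_le_truncatedMass {p : ℕ → ℝ} (hp0 : ∀ k, 0 ≤ p k) (hp1 : ∀ k, p k ≤ 1)
    (hs : Summable p) (r : ℕ) {n : ℕ} (hn : 0 < n) :
    (n.choose r : ℝ) * ∑' k, p k ^ (r + 1) * (1 - p k) ^ (n - r) ≤
      truncatedMass p ((r + 1) / n) := by
  have hterm : ∀ k, (n.choose r : ℝ) * (p k ^ (r + 1) * (1 - p k) ^ (n - r)) ≤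
      min (p k) ((r + 1) / n) := fun k => by
    rw [← mul_assoc]
    refine (choose_mul_pow_succ_mul_one_sub_pow_le (hp0 k) (hp1 k) n r).trans
      (min_le_min_left _ (div_le_div_of_nonneg_left (by positivity) (by positivity) (by linarith)))
  have hterm0 : ∀ k, 0 ≤ (n.choose r : ℝ) * (p k ^ (r + 1) * (1 - p k) ^ (n - r)) := fun k => by
    have := sub_nonneg.2 (hp1 k); have := hp0 k; positivity
  rw [← tsum_mul_left]
  exact Summable.tsum_le_tsum hterm
    (hs.of_nonneg_of_le hterm0 fun k => (hterm k).trans (min_le_left _ _))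
    (summable_min_const hp0 hs (by positivity))

/-- Proposition A.2 for α ∈ (0,1): if `ν(ε)/(ε^{−α}ℓ(1/ε)) → 0` as
`ε → 0⁺` with `α ∈ (0,1)` and `ℓ` slowly varying, then for all `r ≥ 0`,
`binom(n,r) Σ_k p_k^{r+1}(1 − p_k)^{n−r} / (n^{α−1}ℓ(n)) → 0`. -/
theorem occupancy_RV_vanishing (p : ℕ → ℝ) (hpnn : ∀ k, 0 ≤ p k) (hp : HasSum p 1)
    (α : ℝ) (hα : α ∈ Set.Ioo (0 : ℝ) 1)
    (ℓ : ℝ → ℝ) (hsv : SlowlyVarying ℓ)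
    (hν : Tendsto (fun ε : ℝ => nuR p ε / (ε ^ (-α) * ℓ (1 / ε)))
      (nhdsWithin 0 (Set.Ioi 0)) (nhds 0))
    (r : ℕ) :
    Tendsto (fun n : ℕ =>
        ((n.choose r : ℝ) * ∑' k, p k ^ (r + 1) * (1 - p k) ^ (n - r)) /
          ((n : ℝ) ^ (α - 1) * ℓ n))
      atTop (nhds 0) := by
  have hp1 : ∀ k, p k ≤ 1 := fun k => le_hasSum hp k fun j _ => hpnn j
  have hνo : nuR p =o[𝓝[>] 0] fun ε => ε ^ (-α) * ℓ (1 / ε) := by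
    refine (isLittleO_iff_tendsto' ?_).2 hν
    filter_upwards [self_mem_nhdsWithin,
      tendsto_inv_nhdsGT_zero.eventually hsv.eventually_ne_zero] with ε hε hℓε hzero
    exact absurd hzero (mul_ne_zero (Real.rpow_pos_of_pos hε _).ne' (by rwa [one_div]))
  have hscales : Tendsto (fun n : ℕ => ((r : ℝ) + 1) / n) atTop (𝓝[>] 0) :=
    tendsto_nhdsWithin_iff.2 ⟨tendsto_const_div_atTop_nhds_zero_nat _,
      (eventually_gt_atTop 0).mono fun n hn => Set.mem_Ioi.2 (by positivity)⟩
  have hA : (fun n : ℕ => (n.choose r : ℝ) * ∑' k, p k ^ (r + 1) * (1 - p k) ^ (n - r)) =O[atTop]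
      (truncatedMass p ∘ fun n : ℕ => ((r : ℝ) + 1) / n) := by
    refine IsBigO.of_bound 1 ?_
    filter_upwards [eventually_gt_atTop 0] with n hn
    have hA0 : 0 ≤ (n.choose r : ℝ) * ∑' k, p k ^ (r + 1) * (1 - p k) ^ (n - r) :=
      mul_nonneg (Nat.cast_nonneg _) (tsum_nonneg fun k => by
        have := sub_nonneg.2 (hp1 k); have := hpnn k; positivity)
    rw [one_mul, Real.norm_of_nonneg hA0, Real.norm_eq_abs]
    exact (choose_mul_tsum_le_truncatedMass hpnn hp1 hp.summable r hn).trans (le_abs_self _)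
  have hT := (truncatedMass_isLittleO hpnn hp.summable hα.2 hsv hνo).comp_tendsto hscales
  have hscale := (hsv.isBigO_div_rpow_mul (c := (r : ℝ) + 1) (by positivity) α).comp_tendsto
    tendsto_natCast_atTop_atTop
  exact (hA.trans_isLittleO (hT.trans_isBigO hscale)).tendsto_div_nhds_zero
end
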